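/- For every natural number m, the sum of odd-indexed Perrin numbers ∑_{n=0}^{m} R_{2n+1} equals R_{2m+4} − R_2, i.e., ∑_{n=0}^{m} R_{2n+1} = R_{2m+4} − 2. -/
import Mathlib


def perrin : ℕ → ℤ
  | 0 => 3
  | 1 => 0
  | 2 => 2
  | n + 3 => perrin (n + 1) + perrin n

theorem perrin_odd_sum (m : ℕ) :
    ∑ n ∈ Finset.range (m + 1), perrin (2 * n + 1) = perrin (2 * m + 4) - 2 := by
  have key : ∀ n, perrin (n + 3) = perrin (n + 1) + perrin n := fun n => rfl
  induction m with
  | zero => simp [perrin]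
  | succ k ih =>
    rw [Finset.sum_range_succ, ih]
    have h : 2 * (k + 1) + 4 = (2 * k + 3) + 3 := by omega
    have h2 : 2 * (k + 1) + 1 = 2 * k + 3 := by omega
    have h3 : 2 * k + 3 + 1 = 2 * k + 4 := by omega
    rw [h, key (2 * k + 3), h3]
    ring
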